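/- Let α ∈ (0,1) be irrational and m a positive integer with {mα} > 1/2. Then the Sturmian word s_{α,0} contains an abelian power of period m and exponent k ≥ 2 if and only if 1 - {mα} < 1/k. -/

import Mathlib

/-!
Write `β = {mα}` and `δ = 1 - β`. For `0 ≤ α < 1` the number of `a`'s in the length-`m` factor
at position `n` is `⌊(n + m)α⌋ - ⌊nα⌋ = ⌊mα⌋ + [δ ≤ {nα}]`, so two such factors are abelian
equivalent iff their `{nα}` lie on the same side of `δ`. The shift `n ↦ n + m` moves `{nα}`
down by `δ` when `δ ≤ {nα}` and up by `β` otherwise. When `β > 1/2` an upward move lands in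
`[δ, 1)`, so an abelian power of exponent `k ≥ 2` must start at an `n` with `δ ≤ {nα}`, and its
`k` blocks all start at or above `δ` iff `kδ ≤ {nα}`. By density of `{nα}` such an `n ≥ 1`
exists iff `kδ < 1`.
-/

open scoped Classical

/-- The Parikh vector (number of `a`'s, number of `b`'s) of the length-`m` factor of the
Sturmian word `s_{α,0}` starting at position `n`, where the letter at position `p ≥ 1` is
`a` iff `{pα} ≥ {-α} = 1 - α`. -/
noncomputable def sturmParikh (α : ℝ) (n m : ℕ) : ℕ × ℕ :=
  (((Finset.range m).filter fun i => 1 - α ≤ Int.fract (((n + i : ℕ) : ℝ) * α)).card,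
   ((Finset.range m).filter fun i => Int.fract (((n + i : ℕ) : ℝ) * α) < 1 - α).card)

/-- The factor of `s_{α,0}` of length `k*m` starting at position `n` is an abelian power
of period `m` and exponent `k`: its `k` consecutive blocks of length `m` share the same
Parikh vector. -/
noncomputable def HasAbelianPowerAt (α : ℝ) (n m k : ℕ) : Prop :=
  ∀ j < k, sturmParikh α (n + j * m) m = sturmParikh α n m

/-- The Sturmian word `s_{α,0}` contains an abelian power of period `m` and exponent `k`. -/
noncomputable def HasAbelianPower (α : ℝ) (m k : ℕ) : Prop :=
  ∃ n : ℕ, 1 ≤ n ∧ HasAbelianPowerAt α n m k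

open Int

section FloorRing

variable {R : Type*} [CommRing R] [LinearOrder R] [IsStrictOrderedRing R] [FloorRing R]

theorem Int.floor_add_eq_ite (x y : R) :
    ⌊x + y⌋ = ⌊x⌋ + ⌊y⌋ + if 1 - fract y ≤ fract x then 1 else 0 := by
  have hsplit : x + y = (fract x + fract y) + ((⌊x⌋ + ⌊y⌋ : ℤ) : R) := by
    simp only [Int.fract]; push_cast; ring
  have hx0 := fract_nonneg x
  have hx1 := fract_lt_one x
  have hy0 := fract_nonneg y
  have hy1 := fract_lt_one y
  rw [hsplit, floor_add_intCast, add_comm]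
  split_ifs with h
  · have : ⌊fract x + fract y⌋ = 1 :=
      floor_eq_iff.2 ⟨by push_cast; linarith, by push_cast; linarith⟩
    rw [this]
  · have : ⌊fract x + fract y⌋ = 0 :=
      floor_eq_iff.2 ⟨by push_cast; linarith, by push_cast; linarith⟩
    rw [this]

theorem Int.fract_add_eq_ite (x y : R) :
    fract (x + y) = fract x + fract y - if 1 - fract y ≤ fract x then 1 else 0 := by
  rw [Int.fract, floor_add_eq_ite]
  split_ifs <;> simp only [Int.fract] <;> push_cast <;> ring

end FloorRing

theorem Irrational.exists_lt_fract_nat_mul {α : ℝ} (hirr : Irrational α) {c : ℝ} (hc : c < 1) :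
    ∃ n : ℕ, 0 < n ∧ c < fract ((n : ℝ) * α) := by
  wlog hc0 : 0 ≤ c generalizing c
  · obtain ⟨n, hn, h⟩ := this zero_lt_one le_rfl
    exact ⟨n, hn, by linarith⟩
  obtain ⟨N, hN⟩ := exists_nat_one_div_lt (sub_pos.2 hc)
  obtain ⟨k, hk, -, hkN⟩ := Real.exists_nat_abs_mul_sub_round_le α N.succ_pos
  set r := (k : ℝ) * α - round ((k : ℝ) * α)
  have hr_lt : |r| < 1 - c := by
    refine lt_of_le_of_lt (hkN.trans ?_) hN
    gcongr
    linarith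
  have hr0 : r ≠ 0 := sub_ne_zero.2 ((hirr.natCast_mul hk.ne').ne_int _)
  obtain ⟨hr_low, hr_up⟩ := abs_lt.1 hr_lt
  rcases hr0.lt_or_gt with hneg | hpos
  · have hfract : fract ((k : ℝ) * α) = 1 + r :=
      fract_eq_iff.2 ⟨by linarith, by linarith, round ((k : ℝ) * α) - 1, by push_cast; ring⟩
    exact ⟨k, hk, by rw [hfract]; linarith⟩
  · -- the first multiple of the small positive `r` that exceeds `c` is still below `c + r < 1`
    set t := ⌊c / r⌋₊ + 1 with ht
    have hct : c < t * r := by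
      rw [← div_lt_iff₀ hpos, ht]; push_cast; exact Nat.lt_floor_add_one _
    have htr : (t : ℝ) * r < 1 := by
      have := (le_div_iff₀ hpos).1 (Nat.floor_le (div_nonneg hc0 hpos.le))
      calc (t : ℝ) * r = ⌊c / r⌋₊ * r + r := by rw [ht]; push_cast; ring
        _ ≤ c + r := by linarith
        _ < 1 := by linarith
    have hfract : fract (((t * k : ℕ) : ℝ) * α) = t * r :=
      fract_eq_iff.2 ⟨by positivity, htr, t * round ((k : ℝ) * α), by push_cast; ring⟩
    exact ⟨t * k, by positivity, by rw [hfract]; exact hct⟩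

theorem sturmParikh_fst_add_snd (α : ℝ) (n m : ℕ) :
    (sturmParikh α n m).1 + (sturmParikh α n m).2 = m := by
  simp only [sturmParikh, ← not_le]
  rw [Finset.card_filter_add_card_filter_not, Finset.card_range]

theorem natCast_sturmParikh_fst {α : ℝ} (h0 : 0 ≤ α) (h1 : α < 1) (n m : ℕ) :
    ((sturmParikh α n m).1 : ℤ) = ⌊((n + m : ℕ) : ℝ) * α⌋ - ⌊(n : ℝ) * α⌋ := by
  set f : ℕ → ℤ := fun i => ⌊((n + i : ℕ) : ℝ) * α⌋
  have step : ∀ i, ((if 1 - α ≤ fract (((n + i : ℕ) : ℝ) * α) then 1 else 0 : ℕ) : ℤ) =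
      f (i + 1) - f i := by
    intro i
    have hshift : ((n + (i + 1) : ℕ) : ℝ) * α = ((n + i : ℕ) : ℝ) * α + α := by push_cast; ring
    simp only [f, hshift, floor_add_eq_ite, floor_eq_zero_iff.2 ⟨h0, h1⟩,
      fract_eq_self.2 ⟨h0, h1⟩]
    split_ifs <;> simp
  simp only [sturmParikh, Finset.card_filter, Nat.cast_sum, step]
  rw [Finset.sum_range_sub]
  simp only [f, add_zero]

theorem natCast_sturmParikh_fst_eq_ite {α : ℝ} (h0 : 0 ≤ α) (h1 : α < 1) (n m : ℕ) :
    ((sturmParikh α n m).1 : ℤ) =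
      ⌊(m : ℝ) * α⌋ + if 1 - fract ((m : ℝ) * α) ≤ fract ((n : ℝ) * α) then 1 else 0 := by
  rw [natCast_sturmParikh_fst h0 h1, Nat.cast_add, add_mul, floor_add_eq_ite]
  ring

theorem sturmParikh_eq_iff {α : ℝ} (h0 : 0 ≤ α) (h1 : α < 1) (n n' m : ℕ) :
    sturmParikh α n' m = sturmParikh α n m ↔
      (1 - fract ((m : ℝ) * α) ≤ fract ((n' : ℝ) * α) ↔
        1 - fract ((m : ℝ) * α) ≤ fract ((n : ℝ) * α)) := by
  have hfst : sturmParikh α n' m = sturmParikh α n m ↔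
      (sturmParikh α n' m).1 = (sturmParikh α n m).1 := by
    refine ⟨congrArg Prod.fst, fun h => Prod.ext h ?_⟩
    have := sturmParikh_fst_add_snd α n' m
    have := sturmParikh_fst_add_snd α n m
    omega
  rw [hfst, ← Nat.cast_inj (R := ℤ), natCast_sturmParikh_fst_eq_ite h0 h1,
    natCast_sturmParikh_fst_eq_ite h0 h1]
  split_ifs <;> simp [*]

theorem fract_add_mul_eq_sub {α : ℝ} (m p j : ℕ)
    (h : j * (1 - fract ((m : ℝ) * α)) ≤ fract ((p : ℝ) * α)) :
    fract (((p + j * m : ℕ) : ℝ) * α) = fract ((p : ℝ) * α) - j * (1 - fract ((m : ℝ) * α)) := by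
  induction j with
  | zero => simp
  | succ j ih =>
    have hδ : 0 ≤ 1 - fract ((m : ℝ) * α) := by linarith [fract_lt_one ((m : ℝ) * α)]
    rw [Nat.cast_succ, add_one_mul] at h
    have hj := ih (by linarith)
    have hshift : ((p + (j + 1) * m : ℕ) : ℝ) * α = ((p + j * m : ℕ) : ℝ) * α + m * α := by
      push_cast; ring
    rw [hshift, fract_add_eq_ite, if_pos (by rw [hj]; linarith), hj]
    push_cast
    ring

theorem forall_lt_le_fract_add_mul_iff {α : ℝ} {m p k : ℕ} :
    (∀ j < k, 1 - fract ((m : ℝ) * α) ≤ fract (((p + j * m : ℕ) : ℝ) * α)) ↔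
      k * (1 - fract ((m : ℝ) * α)) ≤ fract ((p : ℝ) * α) := by
  have hδ : 0 ≤ 1 - fract ((m : ℝ) * α) := by linarith [fract_lt_one ((m : ℝ) * α)]
  constructor
  · intro h
    induction k with
    | zero => simp [fract_nonneg]
    | succ k ih =>
      have hk := ih fun j hj => h j (by omega)
      have hlast := h k (by omega)
      rw [fract_add_mul_eq_sub m p k hk] at hlast
      push_cast
      linarith
  · intro h j hj
    have hjk : ((j + 1 : ℕ) : ℝ) ≤ k := by exact_mod_cast hj
    have hj1 := (mul_le_mul_of_nonneg_right hjk hδ).trans h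
    push_cast at hj1
    rw [fract_add_mul_eq_sub m p j (by linarith)]
    linarith

theorem hasAbelianPowerAt_iff_of_fract_gt_half {α : ℝ} (h0 : 0 ≤ α) (h1 : α < 1) {n m k : ℕ}
    (hhalf : 1 / 2 < fract ((m : ℝ) * α)) (hk : 2 ≤ k) :
    HasAbelianPowerAt α n m k ↔ k * (1 - fract ((m : ℝ) * α)) ≤ fract ((n : ℝ) * α) := by
  rw [← forall_lt_le_fract_add_mul_iff, HasAbelianPowerAt]
  simp only [sturmParikh_eq_iff h0 h1]
  constructor
  · intro h
    have hn : 1 - fract ((m : ℝ) * α) ≤ fract ((n : ℝ) * α) := by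
      by_contra! hlt
      have hup : fract (((n + 1 * m : ℕ) : ℝ) * α) = fract ((n : ℝ) * α) + fract ((m : ℝ) * α) := by
        rw [one_mul, Nat.cast_add, add_mul, fract_add_eq_ite, if_neg hlt.not_ge, sub_zero]
      exact hlt.not_ge ((h 1 hk).1 (by rw [hup]; linarith [fract_nonneg ((n : ℝ) * α)]))
    exact fun j hj => (h j hj).2 hn
  · intro h j hj
    exact iff_of_true (h j hj) (by simpa using h 0 (by omega))

theorem hasAbelianPower_iff_of_fract_gt_half_general
    (α : ℝ) (hα : α ∈ Set.Ioo (0 : ℝ) 1) (hirr : Irrational α)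
    (m : ℕ) (hhalf : 1 / 2 < Int.fract ((m : ℝ) * α))
    (k : ℕ) (hk : 2 ≤ k) :
    HasAbelianPower α m k ↔ 1 - Int.fract ((m : ℝ) * α) < 1 / (k : ℝ) := by
  simp only [HasAbelianPower, hasAbelianPowerAt_iff_of_fract_gt_half hα.1.le hα.2 hhalf hk]
  rw [lt_div_iff₀ (by positivity), mul_comm]
  constructor
  · rintro ⟨n, -, hn⟩
    exact hn.trans_lt (fract_lt_one _)
  · intro h
    obtain ⟨n, hn, hlt⟩ := hirr.exists_lt_fract_nat_mul h
    exact ⟨n, hn, hlt.le⟩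

/-- For irrational `α ∈ (0,1)` and `m ≥ 1` with `{mα} > 1/2`, the word
`s_{α,0}` contains an abelian power of period `m` and exponent `k ≥ 2` iff
`1 - {mα} < 1/k`. -/
theorem hasAbelianPower_iff_of_fract_gt_half
    (α : ℝ) (hα : α ∈ Set.Ioo (0 : ℝ) 1) (hirr : Irrational α)
    (m : ℕ) (hm : 0 < m) (hhalf : 1 / 2 < Int.fract ((m : ℝ) * α))
    (k : ℕ) (hk : 2 ≤ k) :
    HasAbelianPower α m k ↔ 1 - Int.fract ((m : ℝ) * α) < 1 / (k : ℝ) :=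
  hasAbelianPower_iff_of_fract_gt_half_general α hα hirr m hhalf k hk
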